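/- arXiv:1404.0715 — 2 statements merged into one kernel-verified Lean document; each statement's English description precedes it below -/
import Mathlib

section
/- Let g be a finite-dimensional Lie algebra with sl2-triple {e,h,f} acting via the adjoint representation. Then g = g^f ⊕ [e,g] and g = g^e ⊕ [f,g], and moreover g^f is orthogonal to [f,g] and [e,g] is orthogonal to g^e with respect to any invariant symmetric bilinear form. -/
/-!
Orthogonality only uses invariance: `B p ⁅x, y⁆ = B ⁅p, x⁆ y`, which vanishes when `⁅x, p⁆ = 0`.

For the decompositions it suffices, by a rank count applied to `{e, h, f}` and to the triple
`{f, -h, e}`, to show that `ker f ∩ range e = 0` in every finite-dimensional representation.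
Since `⁅h, e⁆ = 2e`, the powers `e^n` are eigenvectors of `ad h` on `End M` with the distinct
eigenvalues `2n`, so `e` is nilpotent and `ker f ∩ range e^(k+1) = 0` can be proved by descending
induction on `k`. If `v = e^(k+1) u` is killed by `f`, the identity
`e f e^(k+1) = e^(k+2) f - (k+1) (h - (k+2)) e^(k+1)` puts `(h - (k+2)) v` into
`ker f ∩ range e^(k+2) = 0`; so `v` is a lowest-weight vector of weight `k+2 > 0`, hence zero.
-/

open LieAlgebra LieModule LinearMap

attribute [local instance 100] LieRing.ofAssociativeRing

section Associative

variable {R A : Type*} [CommRing R] [Ring A] [Algebra R A]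

lemma lie_pow_of_lie_eq_smul {a b : A} {c : R} (hab : ⁅a, b⁆ = c • b) (n : ℕ) :
    ⁅a, b ^ n⁆ = (n * c) • b ^ n := by
  induction n with
  | zero => simp [LieRing.of_associative_ring_bracket]
  | succ n ih =>
    have leibniz : ⁅a, b ^ (n + 1)⁆ = ⁅a, b ^ n⁆ * b + b ^ n * ⁅a, b⁆ := by
      simp only [LieRing.of_associative_ring_bracket]; noncomm_ring
    rw [leibniz, ih, hab, smul_mul_assoc, mul_smul_comm, ← pow_succ]
    push_cast
    module

variable {h e f : A}

lemma lie_pow_succ_of_sl2 (hhe : ⁅h, e⁆ = (2 : R) • e) (hef : ⁅e, f⁆ = h) (n : ℕ) :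
    ⁅f, e ^ (n + 1)⁆ = -((n + 1 : R) • (e ^ n * h) + (n * (n + 1) : R) • e ^ n) := by
  induction n with
  | zero => rw [zero_add, pow_one, ← lie_skew, hef]; simp
  | succ n ih =>
    have leibniz : ⁅f, e ^ (n + 2)⁆ = ⁅f, e ^ (n + 1)⁆ * e + e ^ (n + 1) * ⁅f, e⁆ := by
      simp only [LieRing.of_associative_ring_bracket]; noncomm_ring
    have commute : e ^ n * h * e = e ^ (n + 1) * h + (2 : R) • e ^ (n + 1) := by
      have hhe' : h * e = e * h + (2 : R) • e := by
        rw [← sub_eq_iff_eq_add', ← LieRing.of_associative_ring_bracket, hhe]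
      rw [mul_assoc, hhe', mul_add, ← mul_assoc, ← pow_succ, mul_smul_comm, ← pow_succ]
    rw [leibniz, ih, ← lie_skew f e, hef, neg_mul, add_mul, smul_mul_assoc, smul_mul_assoc,
      commute, ← pow_succ, mul_neg]
    push_cast
    module

lemma mul_mul_pow_succ_of_sl2 (hhe : ⁅h, e⁆ = (2 : R) • e) (hef : ⁅e, f⁆ = h) (n : ℕ) :
    e * f * e ^ (n + 1) =
      e ^ (n + 2) * f - (n + 1 : R) • (h * e ^ (n + 1) - (n + 2 : R) • e ^ (n + 1)) := by
  have hfe := lie_pow_succ_of_sl2 hhe hef n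
  have hhe := lie_pow_of_lie_eq_smul hhe (n + 1)
  rw [LieRing.of_associative_ring_bracket] at hfe hhe
  calc e * f * e ^ (n + 1) = e ^ (n + 2) * f + e * (f * e ^ (n + 1) - e ^ (n + 1) * f) := by
        rw [mul_sub, ← mul_assoc, ← mul_assoc, ← pow_succ']
        abel
    _ = _ := by
      rw [hfe, mul_neg, mul_add, mul_smul_comm, mul_smul_comm, ← mul_assoc, ← pow_succ']
      push_cast at hhe ⊢
      linear_combination (norm := module) ((n : R) + 1) • hhe

end Associative

theorem Module.End.isNilpotent_of_lie_eq_smul {K V : Type*} [Field K] [CharZero K]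
    [AddCommGroup V] [Module K V] [FiniteDimensional K V] {a b : Module.End K V} {c : K}
    (hc : c ≠ 0) (hab : ⁅a, b⁆ = c • b) : IsNilpotent b := by
  by_contra hb
  have hinj : Function.Injective fun n : ℕ ↦ (n * c : K) := fun m n hmn ↦ by
    simpa [hc] using hmn
  refine Module.Finite.not_linearIndependent_of_infinite _
    ((ad K (Module.End K V) a).eigenvectors_linearIndependent' _ hinj (b ^ ·)
      fun n ↦ ?_)
  exact ⟨Module.End.mem_eigenspace_iff.mpr (lie_pow_of_lie_eq_smul hab n), fun h ↦ hb ⟨n, h⟩⟩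

lemma LinearMap.isCompl_ker_range_of_disjoint {K V W : Type*} [DivisionRing K]
    [AddCommGroup V] [Module K V] [FiniteDimensional K V]
    [AddCommGroup W] [Module K W] [FiniteDimensional K W] {a : V →ₗ[K] W} {b : W →ₗ[K] V}
    (hab : Disjoint (ker a) (range b)) (hba : Disjoint (ker b) (range a)) :
    IsCompl (ker a) (range b) := by
  have := Submodule.finrank_add_finrank_le_of_disjoint hba
  have := finrank_range_add_finrank_ker a
  have := finrank_range_add_finrank_ker b
  exact (Submodule.isCompl_iff_disjoint _ _ (by omega)).mpr hab

namespace IsSl2Triple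

variable {K L M : Type*} [Field K] [CharZero K] [LieRing L] [LieAlgebra K L]
  [AddCommGroup M] [Module K M] [LieRingModule L M] [LieModule K L M] [FiniteDimensional K M]
  {h e f : L}

lemma eq_zero_of_lie_f_eq_zero_of_lie_h_eq_succ_smul (t : IsSl2Triple h e f) {v : M} {n : ℕ}
    (hf : ⁅f, v⁆ = 0) (hh : ⁅h, v⁆ = (n + 1 : K) • v) : v = 0 := by
  by_contra hv
  have P : t.symm.HasPrimitiveVectorWith v (-(n + 1 : K)) :=
    ⟨hv, by rw [neg_lie, hh, neg_smul], hf⟩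
  obtain ⟨m, hm⟩ := P.exists_nat
  have : ((m + n : ℕ) : K) + 1 = 0 := by push_cast; linear_combination -hm
  exact Nat.cast_add_one_ne_zero _ this

lemma disjoint_ker_toEnd_f_range_pow_toEnd_e_of_succ (t : IsSl2Triple h e f) {k : ℕ}
    (hk : Disjoint (ker (toEnd K L M f)) (range (toEnd K L M e ^ (k + 2)))) :
    Disjoint (ker (toEnd K L M f)) (range (toEnd K L M e ^ (k + 1))) := by
  set E := toEnd K L M e
  set F := toEnd K L M f
  set H := toEnd K L M h
  rw [Submodule.disjoint_def]
  rintro v hFv ⟨u, rfl⟩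
  rw [mem_ker] at hFv
  have hE : ⁅H, E⁆ = (2 : K) • E := by rw [← LieHom.map_lie, t.lie_h_e_smul K, map_smul]
  have hF : ⁅E, F⁆ = H := by rw [← LieHom.map_lie, t.lie_e_f]
  have key : (k + 1 : K) • (H ((E ^ (k + 1)) u) - (k + 2 : K) • (E ^ (k + 1)) u) =
      (E ^ (k + 2)) (F u) := by
    have := congr($(mul_mul_pow_succ_of_sl2 hE hF k) u)
    simp only [Module.End.mul_apply, hFv, map_zero, LinearMap.sub_apply,
      LinearMap.smul_apply] at this
    exact (sub_eq_zero.mp this.symm).symm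
  set v := (E ^ (k + 1)) u
  have hw_ker : H v - (k + 2 : K) • v ∈ ker F := by
    have hHF : ⁅H, F⁆ = -((2 : K) • F) := by
      rw [← LieHom.map_lie, t.lie_lie_smul_f K, map_neg, map_smul]
    have hFHv := congr($hHF v)
    rw [LieRing.of_associative_ring_bracket] at hFHv
    simp only [LinearMap.sub_apply, Module.End.mul_apply, hFv, map_zero, LinearMap.neg_apply,
      LinearMap.smul_apply, smul_zero, neg_zero, zero_sub, neg_eq_zero] at hFHv
    rw [mem_ker, map_sub, map_smul, hFv, hFHv, smul_zero, sub_zero]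
  have hw_range : H v - (k + 2 : K) • v ∈ range (E ^ (k + 2)) :=
    ⟨(k + 1 : K)⁻¹ • F u, by rw [map_smul, ← key, inv_smul_smul₀ (Nat.cast_add_one_ne_zero k)]⟩
  have hHv : H v = (k + 2 : K) • v :=
    sub_eq_zero.mp (Submodule.disjoint_def.mp hk _ hw_ker hw_range)
  refine t.eq_zero_of_lie_f_eq_zero_of_lie_h_eq_succ_smul (K := K) (n := k + 1) hFv ?_
  rw [← toEnd_apply_apply (R := K), hHv]
  push_cast
  ring_nf

lemma disjoint_ker_toEnd_f_range_toEnd_e (t : IsSl2Triple h e f) :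
    Disjoint (ker (toEnd K L M f)) (range (toEnd K L M e)) := by
  obtain ⟨N, hN⟩ := Module.End.isNilpotent_of_lie_eq_smul two_ne_zero
    (by rw [← LieHom.map_lie, t.lie_h_e_smul K, map_smul] :
      ⁅toEnd K L M h, toEnd K L M e⁆ = (2 : K) • toEnd K L M e)
  have base : Disjoint (ker (toEnd K L M f)) (range (toEnd K L M e ^ (N + 1))) := by
    simp [pow_succ, hN]
  simpa using Nat.decreasingInduction
    (motive := fun k _ ↦ Disjoint (ker (toEnd K L M f)) (range (toEnd K L M e ^ (k + 1))))
    (fun _ _ ↦ t.disjoint_ker_toEnd_f_range_pow_toEnd_e_of_succ) base (Nat.zero_le N)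

lemma isCompl_ker_toEnd_f_range_toEnd_e (t : IsSl2Triple h e f) :
    IsCompl (ker (toEnd K L M f)) (range (toEnd K L M e)) :=
  isCompl_ker_range_of_disjoint t.disjoint_ker_toEnd_f_range_toEnd_e
    t.symm.disjoint_ker_toEnd_f_range_toEnd_e

end IsSl2Triple

section InvariantForm

variable {R L : Type*} [CommRing R] [LieRing L] [LieAlgebra R L] {B : LinearMap.BilinForm R L}
  {x p q : L}

lemma bilinForm_eq_zero_of_mem_ker_ad_of_mem_range_ad
    (hB : ∀ a b c : L, B ⁅a, b⁆ c = B a ⁅b, c⁆) (hp : p ∈ ker (ad R L x))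
    (hq : q ∈ range (ad R L x)) : B p q = 0 := by
  obtain ⟨y, rfl⟩ := hq
  rw [mem_ker, ad_apply] at hp
  rw [ad_apply, ← hB, ← lie_skew, hp, neg_zero, map_zero, LinearMap.zero_apply]

lemma bilinForm_eq_zero_of_mem_range_ad_of_mem_ker_ad
    (hB : ∀ a b c : L, B ⁅a, b⁆ c = B a ⁅b, c⁆) (hp : p ∈ range (ad R L x))
    (hq : q ∈ ker (ad R L x)) : B p q = 0 := by
  obtain ⟨y, rfl⟩ := hp
  rw [mem_ker, ad_apply] at hq
  rw [ad_apply, ← lie_skew, map_neg, LinearMap.neg_apply, hB, hq, map_zero, neg_zero]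

end InvariantForm

/-- for an sl2-triple `{e,h,f}` in a finite-dimensional Lie algebra `g`
over a characteristic-zero field, `g = g^f ⊕ [e,g]` and `g = g^e ⊕ [f,g]`, and these
decompositions are dual: `g^f ⊥ [f,g]` and `[e,g] ⊥ g^e` for any invariant symmetric
bilinear form. -/
theorem sl2_decompositions_and_orthogonality
    {F : Type*} [Field F] [CharZero F]
    {g : Type*} [LieRing g] [LieAlgebra F g] [Module.Finite F g]
    (e h f : g)
    (hhe : ⁅h, e⁆ = (2 : F) • e) (hhf : ⁅h, f⁆ = -((2 : F) • f)) (hef : ⁅e, f⁆ = h) :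
    IsCompl (LinearMap.ker (LieAlgebra.ad F g f)) (LinearMap.range (LieAlgebra.ad F g e)) ∧
    IsCompl (LinearMap.ker (LieAlgebra.ad F g e)) (LinearMap.range (LieAlgebra.ad F g f)) ∧
    (∀ B : LinearMap.BilinForm F g,
      (∀ a b : g, B a b = B b a) →
      (∀ a b c : g, B ⁅a, b⁆ c = B a ⁅b, c⁆) →
      (∀ p ∈ LinearMap.ker (LieAlgebra.ad F g f),
        ∀ q ∈ LinearMap.range (LieAlgebra.ad F g f), B p q = 0) ∧
      (∀ p ∈ LinearMap.range (LieAlgebra.ad F g e),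
        ∀ q ∈ LinearMap.ker (LieAlgebra.ad F g e), B p q = 0)) := by
  have hcompl : IsCompl (ker (ad F g f)) (range (ad F g e)) ∧
      IsCompl (ker (ad F g e)) (range (ad F g f)) := by
    rcases eq_or_ne h 0 with rfl | hh
    · obtain rfl : e = 0 := by simpa using hhe.symm
      obtain rfl : f = 0 := by simpa using hhf.symm
      simp [isCompl_top_bot]
    have t : IsSl2Triple h e f :=
      ⟨hh, hef, by rw [hhe, ofNat_smul_eq_nsmul], by rw [hhf, ofNat_smul_eq_nsmul]⟩
    exact ⟨t.isCompl_ker_toEnd_f_range_toEnd_e, t.symm.isCompl_ker_toEnd_f_range_toEnd_e⟩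
  refine ⟨hcompl.1, hcompl.2, fun B _ hB ↦ ⟨?_, ?_⟩⟩
  · exact fun p hp q hq ↦ bilinForm_eq_zero_of_mem_ker_ad_of_mem_range_ad hB hp hq
  · exact fun p hp q hq ↦ bilinForm_eq_zero_of_mem_range_ad_of_mem_ker_ad hB hp hq
end

section
/- Let g be a finite-dimensional Lie algebra with sl2-triple {e,h=2x,f} and nondegenerate invariant symmetric bilinear form. The spaces g^f and g^e are nondegenerately paired by the bilinear form, and for any a ∈ g the projection of a onto g^f along [e,g] equals Σ_j (a|q^j) q_j, where {q_j} is a basis of g^f and {q^j} the dual basis of g^e. -/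
/-!
Put `H = ad (2x)`, `E = ad e`, `F = ad f`. The `sl₂` relations make `F` nilpotent (its powers are
eigenvectors of `[H, -]` with the distinct eigenvalues `-2k`), say `F ^ N = 0`. A vector `v` with
`E v = 0` is then killed by `∏_{k<N} (H - k)`. If moreover `v ∈ range F`, it is killed by
`∏_{k<N} (H + k + 2)`, because `H + m + 2` maps `ker E ∩ range F^(m+1)` into
`ker E ∩ range F^(m+2)`. The two polynomials are coprime, so `ker E ∩ range F = 0`; by symmetry
`ker F ∩ range E = 0`, and counting dimensions gives `g = g^f ⊕ [e, g]`.
Invariance of the form makes `[e, g]` orthogonal to `g^e`, so an element of `g^e` orthogonal to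
`g^f` is orthogonal to all of `g`, and the coordinates of `a^♯` in the basis `q_j` are
`(a^♯ | q^j) = (a | q^j)`.
-/

open Module Polynomial LinearMap

lemma mul_pow_sub_pow_mul_of_mul_sub_mul_eq_smul {K A : Type*} [CommRing K] [Ring A]
    [Algebra K A] {X Y : A} {c : K} (h : X * Y - Y * X = c • Y) (k : ℕ) :
    X * Y ^ k - Y ^ k * X = (k * c) • Y ^ k := by
  induction k with
  | zero => simp
  | succ k ih =>
    calc X * Y ^ (k + 1) - Y ^ (k + 1) * X
        = (X * Y ^ k - Y ^ k * X) * Y + Y ^ k * (X * Y - Y * X) := by noncomm_ring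
      _ = ((k + 1 : ℕ) * c) • Y ^ (k + 1) := by
        rw [ih, h, smul_mul_assoc, mul_smul_comm, ← pow_succ, ← add_smul]
        push_cast; ring_nf

lemma Module.End.isNilpotent_of_mul_sub_mul_eq_smul {K V : Type*} [Field K] [CharZero K]
    [AddCommGroup V] [Module K V] [FiniteDimensional K V] {X Y : End K V} {c : K} (hc : c ≠ 0)
    (h : X * Y - Y * X = c • Y) : IsNilpotent Y := by
  by_contra hY
  let D : End K (End K V) := LinearMap.mulLeft K X - LinearMap.mulRight K X
  have hD (k : ℕ) : D.HasEigenvalue (k * c) :=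
    hasEigenvalue_of_hasEigenvector (x := Y ^ k)
      ⟨mem_eigenspace_iff.2 (mul_pow_sub_pow_mul_of_mul_sub_mul_eq_smul h k),
        fun h0 => hY ⟨k, h0⟩⟩
  have hinj : Function.Injective fun k : ℕ => (k : K) * c :=
    fun i j hij => Nat.cast_injective (mul_right_cancel₀ hc hij)
  exact Set.infinite_of_injective_forall_mem hinj hD D.finite_hasEigenvalue

/-- The relations of Mathlib's `IsSl2Triple` in an associative ring, without its condition `h ≠ 0`,
which can fail for the image of a representation. -/
structure SatisfiesSl2Relations {A : Type*} [Ring A] (h e f : A) : Prop where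
  e_mul_f : e * f = f * e + h
  h_mul_e : h * e = e * h + 2 • e
  h_mul_f : h * f = f * h - 2 • f

namespace SatisfiesSl2Relations

section Ring

variable {A : Type*} [Ring A] {h e f : A} (t : SatisfiesSl2Relations h e f)
include t

lemma symm : SatisfiesSl2Relations (-h) f e where
  e_mul_f := by rw [t.e_mul_f]; abel
  h_mul_e := by rw [neg_mul, mul_neg, t.h_mul_f]; abel
  h_mul_f := by rw [neg_mul, mul_neg, t.h_mul_e]; abel

lemma h_mul_f_pow (n : ℕ) : h * f ^ n = f ^ n * h - (2 * n) • f ^ n := by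
  induction n with
  | zero => simp
  | succ n ih =>
    rw [pow_succ, ← mul_assoc, ih]
    simp only [t.h_mul_f, sub_mul, mul_sub, mul_assoc, smul_mul_assoc, mul_smul_comm]
    simp only [← mul_assoc, ← pow_succ]
    module

lemma e_mul_f_pow_succ (n : ℕ) :
    e * f ^ (n + 1) = f ^ (n + 1) * e + (n + 1) • (f ^ n * h) - (n * (n + 1)) • f ^ n := by
  induction n with
  | zero => simp [t.e_mul_f, add_comm]
  | succ n ih =>
    rw [pow_succ, ← mul_assoc, ih]
    simp only [t.e_mul_f, t.h_mul_f, add_mul, sub_mul, mul_add, mul_sub, mul_assoc,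
      smul_mul_assoc, mul_smul_comm]
    simp only [← mul_assoc, ← pow_succ]
    module

lemma smul_h_add_mul_f_pow_succ (n : ℕ) :
    (n + 1) • (h * f ^ (n + 1) + (n + 2) • f ^ (n + 1)) =
      f * (e * f ^ (n + 1)) - f ^ (n + 2) * e := by
  simp only [t.h_mul_f_pow, t.e_mul_f_pow_succ, mul_add, mul_sub, mul_smul_comm, ← mul_assoc,
    ← pow_succ']
  module

end Ring

section End

variable {K V : Type*} [Field K] [AddCommGroup V] [Module K V] {h e f : End K V}
  (t : SatisfiesSl2Relations h e f)
include t

lemma isNilpotent_f [CharZero K] [FiniteDimensional K V] : IsNilpotent f :=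
  End.isNilpotent_of_mul_sub_mul_eq_smul (c := -2) (by norm_num) <| by
    rw [t.h_mul_f]
    module

lemma h_apply_mem_ker {v : V} (hv : v ∈ ker e) : h v ∈ ker e := by
  have := congr($(t.h_mul_e) v)
  simp_all

lemma aeval_prod_X_sub_C_apply_eq_zero [CharZero K] {r : ℕ} {v : V} (hv : v ∈ ker e)
    (hr : (f ^ r) v = 0) : aeval h (∏ k ∈ Finset.range r, (X - C (k : K))) v = 0 := by
  induction r generalizing v with
  | zero => simpa using hr
  | succ r ih =>
    rw [Finset.prod_range_succ, map_mul, End.mul_apply]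
    have hstep : aeval h (X - C (r : K)) v = h v - (r : K) • v := by
      simp [Nat.cast_smul_eq_nsmul]
    rw [hstep]
    apply ih (sub_mem (t.h_apply_mem_ker hv) (Submodule.smul_mem _ _ hv))
    have key : ((r : K) + 1) • (f ^ r) (h v - (r : K) • v) = 0 := by
      have := congr($(t.e_mul_f_pow_succ r) v)
      simp only [End.mul_apply, LinearMap.add_apply, LinearMap.sub_apply, LinearMap.smul_apply,
        mem_ker.1 hv, hr, map_zero, map_sub, map_smul] at this ⊢
      linear_combination (norm := module) -this
    exact (smul_eq_zero.1 key).resolve_left (Nat.cast_add_one_ne_zero r)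

lemma h_add_apply_mem_range [CharZero K] {n : ℕ} {u : V}
    (hu : u ∈ ker e ⊓ range (f ^ (n + 1))) :
    h u + ((n : K) + 2) • u ∈ range (f ^ (n + 2)) := by
  obtain ⟨hue, w, rfl⟩ := Submodule.mem_inf.1 hu
  have key : ((n : K) + 1) • (h ((f ^ (n + 1)) w) + ((n : K) + 2) • (f ^ (n + 1)) w) =
      (f ^ (n + 2)) (-e w) := by
    have := congr($(t.smul_h_add_mul_f_pow_succ n) w)
    simp only [End.mul_apply, LinearMap.add_apply, LinearMap.sub_apply, LinearMap.smul_apply,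
      mem_ker.1 hue, map_zero, map_neg] at this ⊢
    linear_combination (norm := module) this
  refine ⟨((n : K) + 1)⁻¹ • -e w, ?_⟩
  rw [map_smul, ← key, inv_smul_smul₀ (Nat.cast_add_one_ne_zero n)]

lemma aeval_prod_X_add_C_apply_mem [CharZero K] (s : ℕ) {m : ℕ} {v : V}
    (hv : v ∈ ker e ⊓ range (f ^ (m + 1))) :
    aeval h (∏ k ∈ Finset.range s, (X + C ((k + m + 2 : ℕ) : K))) v ∈
      ker e ⊓ range (f ^ (m + 1 + s)) := by
  induction s generalizing m v with
  | zero => simpa using hv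
  | succ s ih =>
    have hstep : aeval h (X + C ((0 + m + 2 : ℕ) : K)) v = h v + ((m : K) + 2) • v := by
      simp only [map_add, aeval_X, aeval_C, LinearMap.add_apply, Module.algebraMap_end_apply]
      rw [Nat.cast_add, Nat.cast_add, Nat.cast_zero, zero_add, Nat.cast_ofNat]
    have hw : h v + ((m : K) + 2) • v ∈ ker e ⊓ range (f ^ (m + 1 + 1)) :=
      ⟨add_mem (t.h_apply_mem_ker hv.1) (Submodule.smul_mem _ _ hv.1),
        t.h_add_apply_mem_range hv⟩
    have hprod : ∏ k ∈ Finset.range s, (X + C ((k + 1 + m + 2 : ℕ) : K)) =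
        ∏ k ∈ Finset.range s, (X + C ((k + (m + 1) + 2 : ℕ) : K)) :=
      Finset.prod_congr rfl fun k _ => by rw [show k + 1 + m + 2 = k + (m + 1) + 2 by omega]
    rw [Finset.prod_range_succ', map_mul, End.mul_apply, hstep, hprod,
      show m + 1 + (s + 1) = m + 1 + 1 + s by omega]
    exact ih hw

lemma disjoint_ker_e_range_f [CharZero K] [FiniteDimensional K V] :
    Disjoint (ker e) (range f) := by
  obtain ⟨N, hN⟩ := t.isNilpotent_f
  have hcoprime : IsCoprime (∏ k ∈ Finset.range N, (X - C (k : K)))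
      (∏ k ∈ Finset.range N, (X + C ((k + 0 + 2 : ℕ) : K))) := by
    refine IsCoprime.prod_left fun i _ => IsCoprime.prod_right fun j _ => ?_
    rw [← sub_neg_eq_add, ← map_neg]
    refine isCoprime_X_sub_C_of_isUnit_sub (IsUnit.mk0 _ ?_)
    rw [sub_neg_eq_add, ← Nat.cast_add]
    exact Nat.cast_ne_zero.2 (by omega)
  rw [Submodule.disjoint_def]
  intro v hve hvf
  refine Submodule.disjoint_def.1 (disjoint_ker_aeval_of_isCoprime h hcoprime) v
    (t.aeval_prod_X_sub_C_apply_eq_zero hve (by rw [hN]; rfl)) ?_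
  have hmem := t.aeval_prod_X_add_C_apply_mem N (m := 0) ⟨hve, by simpa using hvf⟩
  have := (Submodule.mem_inf.1 hmem).2
  rwa [pow_eq_zero_of_le (by omega) hN, range_zero, Submodule.mem_bot] at this

lemma isCompl_ker_f_range_e [CharZero K] [FiniteDimensional K V] :
    IsCompl (ker f) (range e) := by
  have hef := Submodule.finrank_add_finrank_le_of_disjoint t.disjoint_ker_e_range_f
  have rank_nullity_e := finrank_range_add_finrank_ker e
  have rank_nullity_f := finrank_range_add_finrank_ker f
  exact (Submodule.isCompl_iff_disjoint _ _ (by omega)).2 t.symm.disjoint_ker_e_range_f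

end End

end SatisfiesSl2Relations

lemma SatisfiesSl2Relations.ad_two_smul {R L : Type*} [CommRing R] [LieRing L] [LieAlgebra R L]
    {x e f : L} (hxe : ⁅x, e⁆ = e) (hxf : ⁅x, f⁆ = -f) (hef : ⁅e, f⁆ = (2 : R) • x) :
    SatisfiesSl2Relations (LieAlgebra.ad R L ((2 : R) • x)) (LieAlgebra.ad R L e)
      (LieAlgebra.ad R L f) where
  e_mul_f := by ext y; simp [leibniz_lie e f y, hef, add_comm]
  h_mul_e := by ext y; simp [leibniz_lie x e y, hxe]; module
  h_mul_f := by ext y; simp [leibniz_lie x f y, hxf]; rw [← lie_skew f y]; module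

namespace LinearMap.BilinForm

variable {R M : Type*} [CommRing R] [AddCommGroup M] [Module R M]

lemma eq_sum_smul_of_mem_span {ι : Type*} [Fintype ι] [DecidableEq ι]
    {B : LinearMap.BilinForm R M} {u w : ι → M}
    (hdual : ∀ i j, B (u i) (w j) = if i = j then 1 else 0) {v : M}
    (hv : v ∈ Submodule.span R (Set.range u)) : v = ∑ j, B v (w j) • u j := by
  obtain ⟨c, rfl⟩ := (Submodule.mem_span_range_iff_exists_fun R).1 hv
  simp [hdual]

lemma apply_lie_eq_zero_of_lie_eq_zero {L : Type*} [LieRing L] [LieAlgebra R L]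
    {B : LinearMap.BilinForm R L} (hB : ∀ a b c, B ⁅a, b⁆ c = B a ⁅b, c⁆) {e q : L}
    (hq : ⁅e, q⁆ = 0) (b : L) : B ⁅e, b⁆ q = 0 := by
  rw [← lie_skew, map_neg, LinearMap.neg_apply, hB, hq, map_zero, neg_zero]

end LinearMap.BilinForm

theorem pairing_and_projection_formula_general
    {F : Type*} [Field F] [CharZero F]
    {g : Type*} [LieRing g] [LieAlgebra F g] [Module.Finite F g]
    (e x f : g)
    (hxe : ⁅x, e⁆ = e) (hxf : ⁅x, f⁆ = -f) (hef : ⁅e, f⁆ = (2 : F) • x)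
    (B : LinearMap.BilinForm F g)
    (hBinv : ∀ a b c : g, B ⁅a, b⁆ c = B a ⁅b, c⁆)
    (hBnd : B.Nondegenerate)
    {ι : Type*} [Fintype ι] [DecidableEq ι]
    (qf qe : ι → g)
    (hqe : ∀ j, ⁅e, qe j⁆ = 0)
    (hspan : Submodule.span F (Set.range qf) = LinearMap.ker (LieAlgebra.ad F g f))
    (hdual : ∀ i j, B (qf i) (qe j) = if i = j then 1 else 0) :
    (∀ p ∈ LinearMap.ker (LieAlgebra.ad F g f),
      (∀ q ∈ LinearMap.ker (LieAlgebra.ad F g e), B p q = 0) → p = 0) ∧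
    (∀ q ∈ LinearMap.ker (LieAlgebra.ad F g e),
      (∀ p ∈ LinearMap.ker (LieAlgebra.ad F g f), B p q = 0) → q = 0) ∧
    (∀ a af b : g, ⁅f, af⁆ = 0 → a = af + ⁅e, b⁆ →
      af = ∑ j, B a (qe j) • qf j) := by
  have hcompl := (SatisfiesSl2Relations.ad_two_smul hxe hxf hef).isCompl_ker_f_range_e
  refine ⟨fun p hp hperp => ?_, fun q hq hperp => ?_, fun a af b haf ha => ?_⟩
  · have hzero (j : ι) : B p (qe j) = 0 := hperp _ (hqe j)
    rw [B.eq_sum_smul_of_mem_span hdual (v := p) (hspan ▸ hp)]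
    simp [hzero]
  · refine hBnd.2 q fun a => ?_
    obtain ⟨p, hp, _, ⟨b, rfl⟩, rfl⟩ :=
      Submodule.mem_sup.1 (hcompl.sup_eq_top ▸ Submodule.mem_top (x := a))
    rw [map_add, LinearMap.add_apply, hperp p hp, LieAlgebra.ad_apply,
      B.apply_lie_eq_zero_of_lie_eq_zero hBinv hq, add_zero]
  · calc af = ∑ j, B af (qe j) • qf j := B.eq_sum_smul_of_mem_span hdual (hspan ▸ haf)
      _ = ∑ j, B a (qe j) • qf j := by
        refine Finset.sum_congr rfl fun j _ => ?_
        rw [ha, map_add, LinearMap.add_apply, B.apply_lie_eq_zero_of_lie_eq_zero hBinv (hqe j),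
          add_zero]

/-- `g^f` and `g^e` are nondegenerately paired by the invariant form,
and for any `a ∈ g` with decomposition `a = a^♯ + [e,b]` (`a^♯ ∈ g^f`), the projection
onto `g^f` along `[e,g]` is `a^♯ = Σ_j (a|q^j) q_j`, where `{q_j}` is a basis of `g^f`
and `{q^j} ⊆ g^e` the dual family with `(q_i | q^j) = δ_{i,j}`. -/
theorem pairing_and_projection_formula
    {F : Type*} [Field F] [CharZero F]
    {g : Type*} [LieRing g] [LieAlgebra F g] [Module.Finite F g]
    (e x f : g)
    (hxe : ⁅x, e⁆ = e) (hxf : ⁅x, f⁆ = -f) (hef : ⁅e, f⁆ = (2 : F) • x)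
    (B : LinearMap.BilinForm F g)
    (hBsymm : ∀ a b : g, B a b = B b a)
    (hBinv : ∀ a b c : g, B ⁅a, b⁆ c = B a ⁅b, c⁆)
    (hBnd : B.Nondegenerate)
    {ι : Type*} [Fintype ι] [DecidableEq ι]
    (qf qe : ι → g)
    (hqf : ∀ j, ⁅f, qf j⁆ = 0)
    (hqe : ∀ j, ⁅e, qe j⁆ = 0)
    (hspan : Submodule.span F (Set.range qf) = LinearMap.ker (LieAlgebra.ad F g f))
    (hdual : ∀ i j, B (qf i) (qe j) = if i = j then 1 else 0) :
    (∀ p ∈ LinearMap.ker (LieAlgebra.ad F g f),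
      (∀ q ∈ LinearMap.ker (LieAlgebra.ad F g e), B p q = 0) → p = 0) ∧
    (∀ q ∈ LinearMap.ker (LieAlgebra.ad F g e),
      (∀ p ∈ LinearMap.ker (LieAlgebra.ad F g f), B p q = 0) → q = 0) ∧
    (∀ a af b : g, ⁅f, af⁆ = 0 → a = af + ⁅e, b⁆ →
      af = ∑ j, B a (qe j) • qf j) :=
  pairing_and_projection_formula_general e x f hxe hxf hef B hBinv hBnd qf qe hqe hspan hdual
end
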